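/- Let Ω ⊆ ℝⁿ be open, f : Ω×ℝ → ℝ continuous, and g : ℝ → ℝ continuous satisfying (g₀). Set h(x, s) = e^{G(Φ_g⁻¹(s))} f(x, Φ_g⁻¹(s)). Suppose u ∈ C²(Ω) satisfies Du(x) ≠ 0 for all x ∈ Ω. Then u satisfies Δ_∞u/|Du|² + g(u)|Du|² + f(x, u) = 0 at every point of Ω if and only if v = Φ_g ∘ u (which also satisfies Dv ≠ 0 in Ω) satisfies Δ_∞v/|Dv|² + h(x, v) = 0 at every point of Ω. -/

import Mathlib

open Real Filter Set

/-- Gradient of `u` at `x` (vector of partial derivatives). -/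
noncomputable def vgrad {n : ℕ} (u : (Fin n → ℝ) → ℝ) (x : Fin n → ℝ) : Fin n → ℝ :=
  fun i => fderiv ℝ u x (Pi.single i 1)

/-- Hessian matrix of `u` at `x`. -/
noncomputable def vhess {n : ℕ} (u : (Fin n → ℝ) → ℝ) (x : Fin n → ℝ) :
    Matrix (Fin n) (Fin n) ℝ :=
  Matrix.of fun i j => fderiv ℝ (fun y => fderiv ℝ u y (Pi.single j 1)) x (Pi.single i 1)

noncomputable def Gg (g : ℝ → ℝ) (s : ℝ) : ℝ := ∫ τ in (0:ℝ)..s, g τ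

noncomputable def Phig (g : ℝ → ℝ) (t : ℝ) : ℝ := ∫ s in (0:ℝ)..t, Real.exp (Gg g s)

/-- Condition `(g₀)`. -/
def g0cond (g : ℝ → ℝ) : Prop :=
  ∃ s₀ : ℝ, 0 ≤ s₀ ∧ (∀ s, s₀ ≤ s → 0 ≤ g s) ∧ (∀ s, s ≤ -s₀ → g s ≤ 0)

/-- Infinity-Laplacian `Δ_∞ u = ⟨D²u Du, Du⟩`. -/
noncomputable def infLap {n : ℕ} (u : (Fin n → ℝ) → ℝ) (x : Fin n → ℝ) : ℝ :=
  dotProduct (Matrix.mulVec (vhess u x) (vgrad u x)) (vgrad u x)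

/-- Squared Euclidean norm `|p|²` of a vector. -/
noncomputable def normSq {n : ℕ} (p : Fin n → ℝ) : ℝ := ∑ i, p i ^ 2

/-! With `Φ' = e^G` and `Φ'' = g e^G`, the chain rule gives `D(Φ ∘ u) = Φ'(u) Du` and
`D²(Φ ∘ u) = Φ'(u) D²u + Φ''(u) Du ⊗ Du`, so
`Δ_∞(Φ ∘ u) / |D(Φ ∘ u)|² = e^{G(u)} (Δ_∞u / |Du|² + g(u) |Du|²)`.
Since `Φ⁻¹(Φ ∘ u) = u`, the equation for `v = Φ ∘ u` is the equation for `u` multiplied by the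
positive factor `e^{G(u)}`. -/

open Topology

section ChainRule

variable {n : ℕ} {u : (Fin n → ℝ) → ℝ} {x : Fin n → ℝ}

theorem normSq_eq_dotProduct (p : Fin n → ℝ) : normSq p = p ⬝ᵥ p := by
  simp only [normSq, dotProduct, sq]

theorem normSq_ne_zero {p : Fin n → ℝ} (hp : p ≠ 0) : normSq p ≠ 0 := by
  rwa [normSq_eq_dotProduct, Ne, dotProduct_self_eq_zero]

theorem normSq_smul (c : ℝ) (p : Fin n → ℝ) : normSq (c • p) = c ^ 2 * normSq p := by
  simp only [normSq, Pi.smul_apply, smul_eq_mul, mul_pow, Finset.mul_sum]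

theorem vgrad_of_hasFDerivAt {u' : (Fin n → ℝ) →L[ℝ] ℝ} (hu : HasFDerivAt u u' x) :
    vgrad u x = fun i => u' (Pi.single i 1) := by
  unfold vgrad
  rw [hu.fderiv]

theorem vgrad_comp {φ : ℝ → ℝ} {c : ℝ} (hφ : HasDerivAt φ c (u x))
    (hu : DifferentiableAt ℝ u x) : vgrad (φ ∘ u) x = c • vgrad u x := by
  rw [vgrad_of_hasFDerivAt (hφ.comp_hasFDerivAt x hu.hasFDerivAt)]
  rfl

theorem hasFDerivAt_fderiv_apply (hu : DifferentiableAt ℝ (fderiv ℝ u) x) (v : Fin n → ℝ) :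
    HasFDerivAt (fun y => fderiv ℝ u y v)
      ((ContinuousLinearMap.apply ℝ ℝ v).comp (fderiv ℝ (fderiv ℝ u) x)) x :=
  (ContinuousLinearMap.apply ℝ ℝ v).hasFDerivAt.comp x hu.hasFDerivAt

theorem vhess_comp {φ φ' : ℝ → ℝ} {c : ℝ} (hφ : ∀ t, HasDerivAt φ (φ' t) t)
    (hφ' : HasDerivAt φ' c (u x)) (hu : ContDiffAt ℝ 2 u x) :
    vhess (φ ∘ u) x = φ' (u x) • vhess u x + c • Matrix.vecMulVec (vgrad u x) (vgrad u x) := by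
  have hdiff : ∀ᶠ y in 𝓝 x, DifferentiableAt ℝ u y :=
    (hu.eventually (by simp)).mono fun y hy => hy.differentiableAt (by norm_num)
  have hD2 : DifferentiableAt ℝ (fderiv ℝ u) x :=
    (hu.fderiv_right (m := 1) (by norm_num)).differentiableAt (by norm_num)
  ext i j
  have hfd : (fun y => fderiv ℝ (φ ∘ u) y (Pi.single j 1))
      =ᶠ[𝓝 x] fun y => φ' (u y) * fderiv ℝ u y (Pi.single j 1) :=
    hdiff.mono fun y hy => by
      simp [((hφ (u y)).comp_hasFDerivAt y hy.hasFDerivAt).fderiv]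
  have hprod : HasFDerivAt (fun y => φ' (u y) * fderiv ℝ u y (Pi.single j 1)) _ x :=
    (hφ'.comp_hasFDerivAt x hdiff.self_of_nhds.hasFDerivAt).mul
      (hasFDerivAt_fderiv_apply hD2 (Pi.single j 1))
  simp only [vhess, Matrix.of_apply, Matrix.add_apply, Matrix.smul_apply, Matrix.vecMulVec_apply,
    hfd.fderiv_eq, hprod.fderiv, (hasFDerivAt_fderiv_apply hD2 _).fderiv]
  simp only [Function.comp_apply, add_apply, smul_apply,
    ContinuousLinearMap.comp_apply, ContinuousLinearMap.apply_apply, smul_eq_mul, vgrad]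
  ring

theorem infLap_comp {φ φ' : ℝ → ℝ} {c : ℝ} (hφ : ∀ t, HasDerivAt φ (φ' t) t)
    (hφ' : HasDerivAt φ' c (u x)) (hu : ContDiffAt ℝ 2 u x) :
    infLap (φ ∘ u) x =
      φ' (u x) ^ 3 * infLap u x + φ' (u x) ^ 2 * c * normSq (vgrad u x) ^ 2 := by
  rw [infLap, infLap, vhess_comp hφ hφ' hu, vgrad_comp (hφ _) (hu.differentiableAt (by norm_num))]
  simp only [Matrix.mulVec_smul, Matrix.add_mulVec, Matrix.smul_mulVec, Matrix.vecMulVec_mulVec,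
    op_smul_eq_smul, smul_add, dotProduct_smul, add_dotProduct, smul_dotProduct, smul_eq_mul,
    normSq_eq_dotProduct]
  ring

theorem infLap_div_normSq_comp {φ φ' : ℝ → ℝ} {c : ℝ} (hφ : ∀ t, HasDerivAt φ (φ' t) t)
    (hφ' : HasDerivAt φ' c (u x)) (hu : ContDiffAt ℝ 2 u x) (hφu : φ' (u x) ≠ 0)
    (hDu : vgrad u x ≠ 0) :
    infLap (φ ∘ u) x / normSq (vgrad (φ ∘ u) x) =
      φ' (u x) * (infLap u x / normSq (vgrad u x)) + c * normSq (vgrad u x) := by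
  have hS := normSq_ne_zero hDu
  rw [infLap_comp hφ hφ' hu, vgrad_comp (hφ _) (hu.differentiableAt (by norm_num)),
    normSq_smul]
  field_simp

end ChainRule

theorem hasDerivAt_Gg {g : ℝ → ℝ} (hg : Continuous g) (t : ℝ) : HasDerivAt (Gg g) (g t) t :=
  intervalIntegral.integral_hasDerivAt_right (hg.intervalIntegrable _ _)
    (hg.stronglyMeasurableAtFilter _ _) hg.continuousAt

theorem hasDerivAt_Phig {g : ℝ → ℝ} (hg : Continuous g) (t : ℝ) :
    HasDerivAt (Phig g) (exp (Gg g t)) t :=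
  have hE : Continuous fun s => exp (Gg g s) :=
    continuous_exp.comp (continuous_iff_continuousAt.2 fun s => (hasDerivAt_Gg hg s).continuousAt)
  intervalIntegral.integral_hasDerivAt_right (hE.intervalIntegrable _ _)
    (hE.stronglyMeasurableAtFilter _ _) hE.continuousAt

theorem stmt19_general {n : ℕ} (Ω : Set (Fin n → ℝ)) (hΩ : IsOpen Ω)
    (f : (Fin n → ℝ) → ℝ → ℝ)
    (g : ℝ → ℝ) (hg : Continuous g)
    (Φinv : ℝ → ℝ) (hleft : ∀ t : ℝ, Φinv (Phig g t) = t)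
    (u : (Fin n → ℝ) → ℝ) (hu : ContDiffOn ℝ 2 u Ω)
    (hDu : ∀ x ∈ Ω, vgrad u x ≠ 0) :
    (∀ x ∈ Ω, vgrad (Phig g ∘ u) x ≠ 0) ∧
    ((∀ x ∈ Ω, infLap u x / normSq (vgrad u x)
        + g (u x) * normSq (vgrad u x) + f x (u x) = 0) ↔
     (∀ x ∈ Ω, infLap (Phig g ∘ u) x / normSq (vgrad (Phig g ∘ u) x)
        + Real.exp (Gg g (Φinv ((Phig g ∘ u) x))) * f x (Φinv ((Phig g ∘ u) x)) = 0)) := by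
  have hu2 : ∀ x ∈ Ω, ContDiffAt ℝ 2 u x := fun x hx => hu.contDiffAt (hΩ.mem_nhds hx)
  have hΦ' : ∀ t, HasDerivAt (fun s => exp (Gg g s)) (exp (Gg g t) * g t) t :=
    fun t => (hasDerivAt_Gg hg t).exp
  refine ⟨fun x hx => ?_, forall₂_congr fun x hx => ?_⟩
  · rw [vgrad_comp (hasDerivAt_Phig hg _) ((hu2 x hx).differentiableAt (by norm_num))]
    exact smul_ne_zero (exp_ne_zero _) (hDu x hx)
  · have key : infLap (Phig g ∘ u) x / normSq (vgrad (Phig g ∘ u) x)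
          + exp (Gg g (Φinv ((Phig g ∘ u) x))) * f x (Φinv ((Phig g ∘ u) x))
        = exp (Gg g (u x)) * (infLap u x / normSq (vgrad u x)
          + g (u x) * normSq (vgrad u x) + f x (u x)) := by
      rw [infLap_div_normSq_comp (hasDerivAt_Phig hg) (hΦ' _) (hu2 x hx) (exp_ne_zero _) (hDu x hx),
        Function.comp_apply, hleft]
      ring
    rw [key, mul_eq_zero, or_iff_right (exp_ne_zero _)]

/-- game-theoretic / normalized infinity-Laplacian: for u ∈ C²(Ω) with
Du ≠ 0 in Ω, u solves Δ_∞u/|Du|² + g(u)|Du|² + f(x,u) = 0 iff v = Φ_g ∘ u (which also has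
Dv ≠ 0 in Ω) solves Δ_∞v/|Dv|² + h(x,v) = 0, where h(x,s) = e^{G(Φ_g⁻¹(s))} f(x, Φ_g⁻¹(s)). -/
theorem stmt19 {n : ℕ} (Ω : Set (Fin n → ℝ)) (hΩ : IsOpen Ω)
    (f : (Fin n → ℝ) → ℝ → ℝ)
    (hf : ContinuousOn (fun q : (Fin n → ℝ) × ℝ => f q.1 q.2) (Ω ×ˢ Set.univ))
    (g : ℝ → ℝ) (hg : Continuous g) (hg0 : g0cond g)
    (Φinv : ℝ → ℝ) (hleft : ∀ t : ℝ, Φinv (Phig g t) = t)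
    (hright : ∀ s : ℝ, Phig g (Φinv s) = s)
    (u : (Fin n → ℝ) → ℝ) (hu : ContDiffOn ℝ 2 u Ω)
    (hDu : ∀ x ∈ Ω, vgrad u x ≠ 0) :
    (∀ x ∈ Ω, vgrad (Phig g ∘ u) x ≠ 0) ∧
    ((∀ x ∈ Ω, infLap u x / normSq (vgrad u x)
        + g (u x) * normSq (vgrad u x) + f x (u x) = 0) ↔
     (∀ x ∈ Ω, infLap (Phig g ∘ u) x / normSq (vgrad (Phig g ∘ u) x)
        + Real.exp (Gg g (Φinv ((Phig g ∘ u) x))) * f x (Φinv ((Phig g ∘ u) x)) = 0)) :=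
  stmt19_general Ω hΩ f g hg Φinv hleft u hu hDu
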